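/- arXiv:0802.1626 — 9 statements merged into one kernel-verified Lean document; each statement's English description precedes it below -/
import Mathlib

section
/- Let V be a finite-dimensional real vector space and F : V → V a linear map with F³ + F = 0. Then the rank of F is even. -/
open Module

/-- an almost f-structure `F` (i.e. `F³ + F = 0`) on a finite-dimensional
real vector space has even rank. -/
theorem f_structure_rank_even
    (V : Type*) [AddCommGroup V] [Module ℝ V] [FiniteDimensional ℝ V]
    (F : V →ₗ[ℝ] V)
    (hF3 : ∀ x, F (F (F x)) + F x = 0) :
    Even (finrank ℝ (LinearMap.range F)) := by
  set W := LinearMap.range F with hW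
  have hmem : ∀ x ∈ W, F x ∈ W := fun x _ => LinearMap.mem_range_self F x
  set G : W →ₗ[ℝ] W := F.restrict hmem with hG
  have hG2 : G ∘ₗ G = -LinearMap.id := by
    ext ⟨x, hx⟩
    obtain ⟨y, rfl⟩ := hx
    have := hF3 y
    simp only [LinearMap.comp_apply, LinearMap.neg_apply, LinearMap.id_apply, hG,
      LinearMap.restrict_apply]
    simp only [AddSubgroup.coe_neg, Submodule.coe_neg]
    exact eq_neg_of_add_eq_zero_left (hF3 y)
  have hdet : LinearMap.det G * LinearMap.det G = (-1 : ℝ) ^ finrank ℝ W := by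
    rw [← LinearMap.det_comp, hG2]
    have : (-LinearMap.id : W →ₗ[ℝ] W) = (-1 : ℝ) • LinearMap.id := by
      ext x; simp
    rw [this, LinearMap.det_smul, LinearMap.det_id, mul_one]
  rcases Nat.even_or_odd (finrank ℝ W) with h | h
  · exact h
  · exfalso
    rw [h.neg_one_pow] at hdet
    nlinarith [sq_nonneg (LinearMap.det G)]
end

section
/- Let φ : (V, g) → (W, h) be a linear map between finite-dimensional real inner product spaces, where W carries a complex structure J compatible with h (J² = −Id, skew-adjoint). If J ∘ [φ ∘ φᵗ, J] = 0 (the PHWC condition), where φᵗ is the adjoint of φ, then the subspace φᵗ(W^{1,0}) ⊆ V ⊗ ℂ is isotropic for the complex-bilinear extension of g, where W^{1,0} = Ker(J − i) in W ⊗ ℂ. -/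
open scoped TensorProduct RealInnerProductSpace
open Module

/-- The complex-bilinear extension of the real inner product of `V` to `ℂ ⊗[ℝ] V`. -/
noncomputable def bilinExt (V : Type*) [NormedAddCommGroup V] [InnerProductSpace ℝ V] :
    LinearMap.BilinForm ℂ (ℂ ⊗[ℝ] V) :=
  LinearMap.BilinForm.baseChange ℂ (innerₗ V)

section aux

variable {V W U U' : Type*} [NormedAddCommGroup V] [InnerProductSpace ℝ V]
  [NormedAddCommGroup W] [InnerProductSpace ℝ W]
  [NormedAddCommGroup U] [InnerProductSpace ℝ U]
  [NormedAddCommGroup U'] [InnerProductSpace ℝ U']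

/-- Lift a pointwise bilinear identity to base change. -/
lemma bilinExt_comp_eq
    (f : V →ₗ[ℝ] U) (g : W →ₗ[ℝ] U) (f' : V →ₗ[ℝ] U') (g' : W →ₗ[ℝ] U')
    (h : ∀ (v : V) (w : W), ⟪f v, g w⟫ = ⟪f' v, g' w⟫)
    (x : ℂ ⊗[ℝ] V) (y : ℂ ⊗[ℝ] W) :
    bilinExt U (f.baseChange ℂ x) (g.baseChange ℂ y)
      = bilinExt U' (f'.baseChange ℂ x) (g'.baseChange ℂ y) := by
  induction x using TensorProduct.induction_on with
  | zero => simp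
  | add a b ha hb => simp [ha, hb]
  | tmul c v =>
    induction y using TensorProduct.induction_on with
    | zero => simp
    | add a b ha hb =>
      simp only [map_add, LinearMap.baseChange_tmul] at ha hb ⊢
      rw [ha, hb]
    | tmul c' w =>
      simp [bilinExt, LinearMap.baseChange_tmul, h v w,
        innerₗ_apply_apply]

end aux

/-- if a linear map `φ : V → W` into a space with a compatible complex
structure `J` satisfies the PHWC condition `J ∘ [φφᵗ, J] = 0`, then
`φᵗ(W^{1,0}) ⊆ V ⊗ ℂ` is isotropic for the complex-bilinear extension of the inner
product of `V`, where `W^{1,0} = Ker(J - i)` is the `i`-eigenspace of `J` in `W ⊗ ℂ`. -/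
theorem phwc_adjoint_image_isotropic
    (V W : Type*) [NormedAddCommGroup V] [InnerProductSpace ℝ V] [FiniteDimensional ℝ V]
    [NormedAddCommGroup W] [InnerProductSpace ℝ W] [FiniteDimensional ℝ W]
    (φ : V →ₗ[ℝ] W) (J : W →ₗ[ℝ] W)
    (hJ2 : ∀ w, J (J w) = -w)
    (hJskew : ∀ w w' : W, ⟪J w, w'⟫ = -⟪w, J w'⟫)
    (hPHWC : J ∘ₗ ((φ ∘ₗ LinearMap.adjoint φ) ∘ₗ J - J ∘ₗ (φ ∘ₗ LinearMap.adjoint φ)) = 0) :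
    ∀ u ∈ Submodule.map (LinearMap.baseChange ℂ (LinearMap.adjoint φ))
        (Module.End.eigenspace (LinearMap.baseChange ℂ J) Complex.I),
    ∀ v ∈ Submodule.map (LinearMap.baseChange ℂ (LinearMap.adjoint φ))
        (Module.End.eigenspace (LinearMap.baseChange ℂ J) Complex.I),
      bilinExt V u v = 0 := by
  set A := φ ∘ₗ LinearMap.adjoint φ with hA
  -- PHWC implies A commutes with J
  have hcomm : ∀ w, A (J w) = J (A w) := by
    intro w
    have h0 : J ((A ∘ₗ J - J ∘ₗ A) w) = 0 := by
      have := congrFun (congrArg DFunLike.coe hPHWC) w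
      simpa using this
    have h2 : J (J ((A ∘ₗ J - J ∘ₗ A) w)) = 0 := by simpa using congrArg J h0
    rw [hJ2] at h2
    have h3 : (A ∘ₗ J - J ∘ₗ A) w = 0 := neg_eq_zero.mp h2
    have h4 : A (J w) - J (A w) = 0 := by simpa using h3
    exact sub_eq_zero.mp h4
  have hcommℂ : ∀ x, (A.baseChange ℂ) ((J.baseChange ℂ) x)
      = (J.baseChange ℂ) ((A.baseChange ℂ) x) := by
    intro x
    induction x using TensorProduct.induction_on with
    | zero => simp
    | add a b ha hb => simp [ha, hb]
    | tmul c w => simp [LinearMap.baseChange_tmul, hcomm w]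
  rintro u ⟨x, hx, rfl⟩ v ⟨y, hy, rfl⟩
  replace hx : (LinearMap.baseChange ℂ J) x = Complex.I • x := Module.End.mem_eigenspace_iff.mp hx
  replace hy : (LinearMap.baseChange ℂ J) y = Complex.I • y := Module.End.mem_eigenspace_iff.mp hy
  -- move the adjoints over: B_V (φᵗ x) (φᵗ y) = B_W x (A y)
  have step1 : bilinExt V ((LinearMap.adjoint φ).baseChange ℂ x)
      ((LinearMap.adjoint φ).baseChange ℂ y)
      = bilinExt W ((LinearMap.id : W →ₗ[ℝ] W).baseChange ℂ x) (A.baseChange ℂ y) := by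
    apply bilinExt_comp_eq
    intro v w
    simp [hA, real_inner_comm, LinearMap.adjoint_inner_left]
  have hid : (LinearMap.id : W →ₗ[ℝ] W).baseChange ℂ x = x := by
    simp
  -- skewness of J for the extended form
  have hskewℂ : ∀ a b : ℂ ⊗[ℝ] W,
      bilinExt W ((J.baseChange ℂ) a) b = - bilinExt W a ((J.baseChange ℂ) b) := by
    intro a b
    have h1 : bilinExt W (J.baseChange ℂ ((LinearMap.id : W →ₗ[ℝ] W).baseChange ℂ a))
        ((LinearMap.id : W →ₗ[ℝ] W).baseChange ℂ b)
        = bilinExt W ((LinearMap.id : W →ₗ[ℝ] W).baseChange ℂ a)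
          ((-J).baseChange ℂ b) := by
      have := bilinExt_comp_eq (J ∘ₗ LinearMap.id) (LinearMap.id : W →ₗ[ℝ] W)
        (LinearMap.id : W →ₗ[ℝ] W) (-J) (fun v w => by simpa using hJskew v w) a b
      simpa using this
    simpa using h1
  -- z := A.baseChange y is in the i-eigenspace
  set z := A.baseChange ℂ y with hz
  have hzeig : (J.baseChange ℂ) z = Complex.I • z := by
    rw [hz, ← hcommℂ, hy, map_smul]
  -- the extended form vanishes on pairs of i-eigenvectors
  have key : bilinExt W x z = 0 := by
    have eLHS : bilinExt W ((J.baseChange ℂ) x) ((J.baseChange ℂ) z) = - bilinExt W x z := by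
      rw [hx, hzeig]
      simp only [map_smul, LinearMap.smul_apply, smul_eq_mul]
      linear_combination (bilinExt W x z) * Complex.I_mul_I
    have eRHS : bilinExt W ((J.baseChange ℂ) x) ((J.baseChange ℂ) z) = bilinExt W x z := by
      rw [hskewℂ x ((J.baseChange ℂ) z), hzeig, map_smul, hzeig]
      simp [smul_smul, Complex.I_mul_I]
    have e := eLHS.symm.trans eRHS
    have h2 : (2 : ℂ) * bilinExt W x z = 0 := by linear_combination -e
    have := mul_eq_zero.mp h2
    simpa using this
  rw [step1, hid, key]
end

section
/- Let V be a finite-dimensional real inner product space and L ⊆ V ⊗ ℂ a subspace that is isotropic for the complex-bilinear extension of the inner product and satisfies L ∩ L̄ = 0. Then there exists a unique metric almost f-structure F on V (skew-adjoint, F³ + F = 0) of rank 2·dim_ℂ L such that L = Ker(F − i) in V ⊗ ℂ. -/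
open scoped TensorProduct RealInnerProductSpace
open Module

/-- Conjugation on the complexification `ℂ ⊗[ℝ] V`. -/
noncomputable def conjExt (V : Type*) [AddCommGroup V] [Module ℝ V] :
    ℂ ⊗[ℝ] V →ₗ[ℝ] ℂ ⊗[ℝ] V :=
  TensorProduct.map Complex.conjLIE.toLinearEquiv.toLinearMap LinearMap.id

section Aux
variable (V : Type*) [NormedAddCommGroup V] [InnerProductSpace ℝ V]

/-- real part -/
noncomputable def reV : ℂ ⊗[ℝ] V →ₗ[ℝ] V :=
  (TensorProduct.lid ℝ V).toLinearMap ∘ₗ TensorProduct.map Complex.reLm LinearMap.id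

/-- imaginary part -/
noncomputable def imV : ℂ ⊗[ℝ] V →ₗ[ℝ] V :=
  (TensorProduct.lid ℝ V).toLinearMap ∘ₗ TensorProduct.map Complex.imLm LinearMap.id

@[simp] lemma reV_tmul (z : ℂ) (v : V) : reV V (z ⊗ₜ v) = z.re • v := rfl
@[simp] lemma imV_tmul (z : ℂ) (v : V) : imV V (z ⊗ₜ v) = z.im • v := rfl
@[simp] lemma conjExt_tmul (z : ℂ) (v : V) :
    conjExt V (z ⊗ₜ v) = (starRingEnd ℂ z) ⊗ₜ v := rfl

lemma re_im_eq (x : ℂ ⊗[ℝ] V) :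
    (1 : ℂ) ⊗ₜ reV V x + Complex.I ⊗ₜ imV V x = x := by
  induction x using TensorProduct.induction_on with
  | zero => simp
  | tmul z v =>
      simp only [reV_tmul, imV_tmul, TensorProduct.tmul_smul]
      rw [TensorProduct.smul_tmul', TensorProduct.smul_tmul', ← TensorProduct.add_tmul]
      norm_num [Complex.real_smul]
  | add a b ha hb =>
      rw [map_add, map_add, TensorProduct.tmul_add, TensorProduct.tmul_add]
      rw [show (1:ℂ) ⊗ₜ reV V a + (1:ℂ) ⊗ₜ reV V b + (Complex.I ⊗ₜ imV V a + Complex.I ⊗ₜ imV V b)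
        = ((1:ℂ) ⊗ₜ reV V a + Complex.I ⊗ₜ imV V a) + ((1:ℂ) ⊗ₜ reV V b + Complex.I ⊗ₜ imV V b) by abel]
      rw [ha, hb]

@[simp] lemma conjExt_conjExt (x : ℂ ⊗[ℝ] V) : conjExt V (conjExt V x) = x := by
  induction x using TensorProduct.induction_on with
  | zero => simp
  | tmul z v => simp
  | add a b ha hb => simp [ha, hb]

lemma conjExt_smul (z : ℂ) (x : ℂ ⊗[ℝ] V) :
    conjExt V (z • x) = (starRingEnd ℂ z) • conjExt V x := by
  induction x using TensorProduct.induction_on with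
  | zero => simp
  | tmul w v => simp [TensorProduct.smul_tmul', map_mul]
  | add a b ha hb => simp [smul_add, ha, hb]

@[simp] lemma reV_conjExt (x : ℂ ⊗[ℝ] V) : reV V (conjExt V x) = reV V x := by
  induction x using TensorProduct.induction_on with
  | zero => simp
  | tmul z v => simp
  | add a b ha hb => simp [ha, hb]

@[simp] lemma imV_conjExt (x : ℂ ⊗[ℝ] V) : imV V (conjExt V x) = - imV V x := by
  induction x using TensorProduct.induction_on with
  | zero => simp
  | tmul z v => simp
  | add a b ha hb => simp [ha, hb]; abel

lemma conjExt_fixed {V : Type*} [NormedAddCommGroup V] [InnerProductSpace ℝ V]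
    {x : ℂ ⊗[ℝ] V} (h : conjExt V x = x) : (1 : ℂ) ⊗ₜ reV V x = x := by
  have him : imV V x = 0 := by
    have := congrArg (imV V) h
    rw [imV_conjExt] at this
    linear_combination (norm := module) (-(1:ℝ)/2) • this
  conv_rhs => rw [← re_im_eq V x]
  rw [him]
  simp

@[simp] lemma bilinExt_tmul (z w : ℂ) (v u : V) :
    bilinExt V (z ⊗ₜ v) (w ⊗ₜ u) = ⟪v,u⟫ • (z * w) := by simp [bilinExt]

lemma bilinExt_symm (x y : ℂ ⊗[ℝ] V) : bilinExt V x y = bilinExt V y x := by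
  have h : (bilinExt V).IsSymm := by
    rw [LinearMap.BilinForm.isSymm_iff]
    apply LinearMap.BilinForm.IsSymm.baseChange
    refine ⟨fun a b => ?_⟩
    simpa using (real_inner_comm b a)
  have := h.eq y x; simpa using this.symm

lemma bilinExt_conj (x y : ℂ ⊗[ℝ] V) :
    bilinExt V (conjExt V x) (conjExt V y) = starRingEnd ℂ (bilinExt V x y) := by
  induction x using TensorProduct.induction_on with
  | zero => simp
  | tmul z v =>
      induction y using TensorProduct.induction_on with
      | zero => simp
      | tmul w u => simp [Complex.real_smul, map_mul]
      | add a b ha hb => simp only [map_add, ha, hb]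
  | add a b ha hb => simp only [map_add, LinearMap.add_apply, ha, hb]

lemma bilinExt_real (x y : V) :
    bilinExt V ((1:ℂ) ⊗ₜ x) ((1:ℂ) ⊗ₜ y) = (⟪x,y⟫ : ℂ) := by
  simp [Complex.real_smul]

lemma bilinExt_self (x : ℂ ⊗[ℝ] V) :
    bilinExt V (conjExt V x) x = ((‖reV V x‖^2 + ‖imV V x‖^2 : ℝ) : ℂ) := by
  set a := reV V x
  set b := imV V x
  conv_lhs => rw [← re_im_eq V x]
  simp only [map_add, conjExt_tmul, map_one, Complex.conj_I, TensorProduct.neg_tmul, map_neg,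
    LinearMap.neg_apply, LinearMap.add_apply, bilinExt_tmul, Complex.real_smul,
    one_mul, mul_one, Complex.I_mul_I, real_inner_comm b a]
  rw [real_inner_self_eq_norm_sq, real_inner_self_eq_norm_sq]
  push_cast
  rw [real_inner_comm (reV V x) (imV V x)]
  ring

end Aux

section Aux2
variable (V : Type*) [NormedAddCommGroup V] [InnerProductSpace ℝ V]

/-- The conjugate of a complex subspace of the complexification. -/
noncomputable def conjSub (L : Submodule ℂ (ℂ ⊗[ℝ] V)) : Submodule ℂ (ℂ ⊗[ℝ] V) where
  carrier := {x | conjExt V x ∈ L}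
  add_mem' := by
    intro a b ha hb
    simp only [Set.mem_setOf_eq, map_add] at *
    exact L.add_mem ha hb
  zero_mem' := by simp
  smul_mem' := by
    intro z x hx
    simp only [Set.mem_setOf_eq, conjExt_smul] at *
    exact L.smul_mem _ hx

lemma mem_conjSub {V : Type*} [NormedAddCommGroup V] [InnerProductSpace ℝ V]
    {L : Submodule ℂ (ℂ ⊗[ℝ] V)} {x : ℂ ⊗[ℝ] V} :
    x ∈ conjSub V L ↔ conjExt V x ∈ L := Iff.rfl

lemma mem_re_im_of_conjStable (W : Submodule ℂ (ℂ ⊗[ℝ] V))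
    (hW : ∀ x ∈ W, conjExt V x ∈ W) {x : ℂ ⊗[ℝ] V} (hx : x ∈ W) :
    (1:ℂ) ⊗ₜ[ℝ] reV V x ∈ W ∧ (1:ℂ) ⊗ₜ[ℝ] imV V x ∈ W := by
  obtain ⟨a, b, hab⟩ : ∃ a b, x = (1:ℂ) ⊗ₜ[ℝ] a + Complex.I ⊗ₜ[ℝ] b :=
    ⟨reV V x, imV V x, (re_im_eq V x).symm⟩
  subst hab
  have hcx := hW _ hx
  simp only [map_add, conjExt_tmul, map_one, Complex.conj_I, TensorProduct.neg_tmul] at hcx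
  simp only [map_add, reV_tmul, imV_tmul, Complex.one_re, Complex.one_im, Complex.I_re,
    Complex.I_im, one_smul, zero_smul, add_zero, zero_add]
  have hsum : ((1:ℂ) ⊗ₜ[ℝ] a + Complex.I ⊗ₜ[ℝ] b) + ((1:ℂ) ⊗ₜ[ℝ] a + -(Complex.I ⊗ₜ[ℝ] b))
      = (2:ℂ) • ((1:ℂ) ⊗ₜ[ℝ] a) := by
    rw [two_smul]; abel
  have hdiff : ((1:ℂ) ⊗ₜ[ℝ] a + Complex.I ⊗ₜ[ℝ] b) - ((1:ℂ) ⊗ₜ[ℝ] a + -(Complex.I ⊗ₜ[ℝ] b))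
      = (2:ℂ) • (Complex.I ⊗ₜ[ℝ] b) := by
    rw [two_smul]; abel
  constructor
  · have h2 := W.add_mem hx hcx
    rw [hsum] at h2
    have := W.smul_mem (2:ℂ)⁻¹ h2
    rw [smul_smul] at this
    norm_num at this
    exact this
  · have h2 := W.sub_mem hx hcx
    rw [hdiff] at h2
    have h3 := W.smul_mem (2:ℂ)⁻¹ h2
    rw [smul_smul] at h3
    norm_num at h3
    have h4 := W.smul_mem (-Complex.I) h3
    rw [TensorProduct.smul_tmul'] at h4
    norm_num at h4
    exact h4

lemma finrank_fix [FiniteDimensional ℝ V] (W : Submodule ℂ (ℂ ⊗[ℝ] V))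
    (hW : ∀ x ∈ W, conjExt V x ∈ W) :
    finrank ℝ ((W.restrictScalars ℝ).comap (TensorProduct.mk ℝ ℂ V 1)) = finrank ℂ W := by
  set Wfix := (W.restrictScalars ℝ).comap (TensorProduct.mk ℝ ℂ V 1) with hWfix
  have hg0mem : ∀ p : ↥Wfix × ↥Wfix,
      (1:ℂ) ⊗ₜ[ℝ] (p.1 : V) + Complex.I ⊗ₜ[ℝ] (p.2 : V) ∈ W.restrictScalars ℝ := by
    rintro ⟨⟨a, ha⟩, ⟨b, hb⟩⟩
    refine W.add_mem ha ?_
    have : Complex.I ⊗ₜ[ℝ] b = Complex.I • ((1:ℂ) ⊗ₜ[ℝ] b) := by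
      rw [TensorProduct.smul_tmul']; norm_num
    rw [this]
    exact W.smul_mem _ hb
  let g0 : ↥Wfix × ↥Wfix →ₗ[ℝ] ℂ ⊗[ℝ] V :=
    (TensorProduct.mk ℝ ℂ V 1) ∘ₗ (Wfix.subtype ∘ₗ LinearMap.fst ℝ _ _) +
    (TensorProduct.mk ℝ ℂ V Complex.I) ∘ₗ (Wfix.subtype ∘ₗ LinearMap.snd ℝ _ _)
  have hg0 : ∀ p, g0 p ∈ W.restrictScalars ℝ := fun p => hg0mem p
  let g : ↥Wfix × ↥Wfix →ₗ[ℝ] ↥(W.restrictScalars ℝ) := g0.codRestrict _ hg0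
  have hbij : Function.Bijective g := by
    constructor
    · intro p q hpq
      have h0 : (1:ℂ) ⊗ₜ[ℝ] ((p.1 : V) - q.1) + Complex.I ⊗ₜ[ℝ] ((p.2 : V) - q.2) = 0 := by
        have := congrArg (Subtype.val) hpq
        simp only [g, g0, LinearMap.codRestrict_apply, LinearMap.add_apply,
          LinearMap.comp_apply, TensorProduct.mk_apply, LinearMap.fst_apply,
          LinearMap.snd_apply, Submodule.coe_subtype] at this
        rw [TensorProduct.tmul_sub, TensorProduct.tmul_sub]
        rw [show (1:ℂ) ⊗ₜ[ℝ] (p.1:V) - (1:ℂ) ⊗ₜ[ℝ] (q.1:V) +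
            (Complex.I ⊗ₜ[ℝ] (p.2:V) - Complex.I ⊗ₜ[ℝ] (q.2:V))
          = ((1:ℂ) ⊗ₜ[ℝ] (p.1:V) + Complex.I ⊗ₜ[ℝ] (p.2:V))
            - ((1:ℂ) ⊗ₜ[ℝ] (q.1:V) + Complex.I ⊗ₜ[ℝ] (q.2:V)) by abel]
        rw [this, sub_self]
      have h1 := congrArg (reV V) h0
      have h2 := congrArg (imV V) h0
      simp only [map_add, reV_tmul, imV_tmul, Complex.one_re, Complex.one_im,
        Complex.I_re, Complex.I_im, one_smul, zero_smul, add_zero, zero_add, map_zero] at h1 h2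
      exact Prod.ext (Subtype.ext (sub_eq_zero.mp h1)) (Subtype.ext (sub_eq_zero.mp h2))
    · rintro ⟨x, hx⟩
      obtain ⟨hmema, hmemb⟩ := mem_re_im_of_conjStable V W hW hx
      refine ⟨⟨⟨reV V x, hmema⟩, ⟨imV V x, hmemb⟩⟩, ?_⟩
      apply Subtype.ext
      simp only [g, g0, LinearMap.codRestrict_apply, LinearMap.add_apply,
        LinearMap.comp_apply, TensorProduct.mk_apply, LinearMap.fst_apply,
        LinearMap.snd_apply, Submodule.coe_subtype]
      exact re_im_eq V x
  have e := LinearEquiv.ofBijective g hbij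
  have h3 : finrank ℝ (↥Wfix × ↥Wfix) = finrank ℝ ↥(W.restrictScalars ℝ) := e.finrank_eq
  rw [Module.finrank_prod] at h3
  have h4 : finrank ℝ ↥(W.restrictScalars ℝ) = finrank ℝ ↥W :=
    ((Submodule.restrictScalarsEquiv ℝ ℂ (ℂ ⊗[ℝ] V) W).restrictScalars ℝ).finrank_eq
  have h5 : finrank ℝ ℂ * finrank ℂ ↥W = finrank ℝ ↥W := Module.finrank_mul_finrank ℝ ℂ ↥W
  rw [Complex.finrank_real_complex] at h5
  omega

end Aux2

section Aux3
variable (V : Type*) [NormedAddCommGroup V] [InnerProductSpace ℝ V]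

lemma bilinExt_pos_def {x : ℂ ⊗[ℝ] V} (h : bilinExt V (conjExt V x) x = 0) : x = 0 := by
  rw [bilinExt_self] at h
  have h2 : (‖reV V x‖^2 + ‖imV V x‖^2 : ℝ) = 0 := by exact_mod_cast h
  have ha : reV V x = 0 := by
    have := sq_nonneg ‖reV V x‖
    have := sq_nonneg ‖imV V x‖
    have : ‖reV V x‖ = 0 := by nlinarith
    simpa using this
  have hb : imV V x = 0 := by
    have := sq_nonneg ‖reV V x‖
    have := sq_nonneg ‖imV V x‖
    have : ‖imV V x‖ = 0 := by nlinarith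
    simpa using this
  rw [← re_im_eq V x, ha, hb]
  simp

lemma finrank_conjSub [FiniteDimensional ℝ V] (L : Submodule ℂ (ℂ ⊗[ℝ] V)) :
    finrank ℂ (conjSub V L) = finrank ℂ L := by
  let cmap : ↥(L.restrictScalars ℝ) →ₗ[ℝ] ↥((conjSub V L).restrictScalars ℝ) :=
    ((conjExt V).domRestrict (L.restrictScalars ℝ)).codRestrict ((conjSub V L).restrictScalars ℝ)
      (by rintro ⟨x, hx⟩
          simp only [LinearMap.domRestrict_apply, Submodule.restrictScalars_mem]
          rw [mem_conjSub, conjExt_conjExt]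
          exact hx)
  have hbij : Function.Bijective cmap := by
    constructor
    · rintro ⟨x, hx⟩ ⟨y, hy⟩ h
      have := congrArg Subtype.val h
      simp only [cmap, LinearMap.codRestrict_apply, LinearMap.domRestrict_apply] at this
      have := congrArg (conjExt V) this
      rw [conjExt_conjExt, conjExt_conjExt] at this
      exact Subtype.ext this
    · rintro ⟨y, hy⟩
      refine ⟨⟨conjExt V y, hy⟩, ?_⟩
      apply Subtype.ext
      simp [cmap, conjExt_conjExt]
  have h1 : finrank ℝ ↥(L.restrictScalars ℝ) = finrank ℝ ↥((conjSub V L).restrictScalars ℝ) :=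
    (LinearEquiv.ofBijective cmap hbij).finrank_eq
  have h2 : finrank ℝ ↥(L.restrictScalars ℝ) = finrank ℝ ↥L :=
    ((Submodule.restrictScalarsEquiv ℝ ℂ (ℂ ⊗[ℝ] V) L).restrictScalars ℝ).finrank_eq
  have h3 : finrank ℝ ↥((conjSub V L).restrictScalars ℝ) = finrank ℝ ↥(conjSub V L) :=
    ((Submodule.restrictScalarsEquiv ℝ ℂ (ℂ ⊗[ℝ] V) (conjSub V L)).restrictScalars ℝ).finrank_eq
  have h4 : finrank ℝ ℂ * finrank ℂ ↥L = finrank ℝ ↥L := Module.finrank_mul_finrank ℝ ℂ ↥L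
  have h5 : finrank ℝ ℂ * finrank ℂ ↥(conjSub V L) = finrank ℝ ↥(conjSub V L) :=
    Module.finrank_mul_finrank ℝ ℂ ↥(conjSub V L)
  rw [Complex.finrank_real_complex] at h4 h5
  omega

end Aux3

set_option maxHeartbeats 1000000 in
/-- given an isotropic subspace `L ⊆ V ⊗ ℂ` with `L ∩ conj L = 0`, there is a
unique metric almost f-structure `F` on `V` (skew-adjoint, `F³ + F = 0`) of rank
`2 dim_ℂ L` whose `i`-eigenspace in `V ⊗ ℂ` is exactly `L`. -/
theorem exists_unique_f_structure_of_isotropic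
    (V : Type*) [NormedAddCommGroup V] [InnerProductSpace ℝ V] [FiniteDimensional ℝ V]
    (L : Submodule ℂ (ℂ ⊗[ℝ] V))
    (hiso : ∀ u ∈ L, ∀ v ∈ L, bilinExt V u v = 0)
    (hconj : ∀ v ∈ L, conjExt V v ∈ L → v = 0) :
    ∃! F : V →ₗ[ℝ] V,
      (∀ x, F (F (F x)) + F x = 0) ∧
      (∀ x y, ⟪F x, y⟫ = -⟪x, F y⟫) ∧
      finrank ℝ (LinearMap.range F) = 2 * finrank ℂ L ∧
      Module.End.eigenspace (LinearMap.baseChange ℂ F) Complex.I = L := by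
  classical
  set L' := conjSub V L with hL'def
  set N := L ⊔ L' with hNdef
  set M := (bilinExt V).orthogonal N with hMdef
  have hLN : L ≤ N := le_sup_left
  have hL'N : L' ≤ N := le_sup_right
  -- conjugation stability
  have hcL : ∀ x ∈ L, conjExt V x ∈ L' := by
    intro x hx
    rw [mem_conjSub, conjExt_conjExt]; exact hx
  have hcL' : ∀ x ∈ L', conjExt V x ∈ L := fun x hx => hx
  have hNc : ∀ x ∈ N, conjExt V x ∈ N := by
    intro x hx
    obtain ⟨y, hy, z, hz, rfl⟩ := Submodule.mem_sup.mp hx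
    rw [map_add]
    exact N.add_mem (hL'N (hcL y hy)) (hLN (hcL' z hz))
  have hMmem : ∀ x, x ∈ M ↔ ∀ n ∈ N, bilinExt V n x = 0 := by
    intro x
    exact LinearMap.BilinForm.mem_orthogonal_iff
  have hMc : ∀ x ∈ M, conjExt V x ∈ M := by
    intro x hx
    rw [hMmem] at hx ⊢
    intro n hn
    have h1 := bilinExt_conj V (conjExt V n) x
    rw [conjExt_conjExt] at h1
    rw [h1, hx _ (hNc n hn), map_zero]
  have hMc' : ∀ x ∈ M, conjExt V x ∈ M := hMc
  -- reflexivity and nondegeneracy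
  have hsymm : (bilinExt V).IsSymm := by
    refine ⟨fun x y => ?_⟩
    simpa using bilinExt_symm V x y
  have hrefl : (bilinExt V).IsRefl := hsymm.isRefl
  have hnd : ((bilinExt V).restrict N).Nondegenerate := by
    refine (LinearMap.IsRefl.nondegenerate_iff_separatingLeft (B := (bilinExt V).restrict N)
      (fun x y hxy => hrefl _ _ hxy)).mpr ?_
    rintro ⟨n, hn⟩ h
    have h2 := h ⟨conjExt V n, hNc n hn⟩
    simp only [LinearMap.BilinForm.restrict_apply, LinearMap.domRestrict_apply] at h2
    have h3 : bilinExt V (conjExt V (conjExt V n)) (conjExt V n) = 0 := by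
      rwa [conjExt_conjExt]
    have h4 := bilinExt_pos_def V h3
    apply Subtype.ext
    show n = 0
    calc n = conjExt V (conjExt V n) := (conjExt_conjExt V n).symm
      _ = conjExt V 0 := by rw [h4]
      _ = 0 := map_zero _
  have hcompl : IsCompl N M :=
    LinearMap.BilinForm.isCompl_orthogonal_of_restrict_nondegenerate hrefl hnd
  have hBNM : ∀ n ∈ N, ∀ m ∈ M, bilinExt V n m = 0 := by
    intro n hn m hm
    exact ((hMmem m).mp hm) n hn
  have hBMN : ∀ m ∈ M, ∀ n ∈ N, bilinExt V m n = 0 := by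
    intro m hm n hn
    rw [bilinExt_symm]
    exact hBNM n hn m hm
  -- disjointness facts
  have hdisjLL' : Disjoint L L' := by
    rw [Submodule.disjoint_def]
    intro x hx hx'
    exact hconj x hx (hcL' x hx')
  have hdisjL'M : Disjoint L' M := Disjoint.mono_left hL'N hcompl.disjoint
  have hdisjLM : Disjoint L M := Disjoint.mono_left hLN hcompl.disjoint
  have hdisjL : Disjoint L (L' ⊔ M) := by
    rw [Submodule.disjoint_def]
    intro x hx hx'
    obtain ⟨y, hy, m, hm, rfl⟩ := Submodule.mem_sup.mp hx'
    have hym : m = (y + m) - y := by abel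
    have hmN : m ∈ N := by
      rw [hym]
      exact N.sub_mem (hLN hx) (hL'N hy)
    have hm0 : m = 0 := (Submodule.disjoint_def.mp hcompl.disjoint) m hmN hm
    rw [hm0, add_zero] at hx ⊢
    exact (Submodule.disjoint_def.mp hdisjLL') y hx hy
  have hcomplL : IsCompl L (L' ⊔ M) := by
    constructor
    · exact hdisjL
    · rw [codisjoint_iff, ← sup_assoc, ← hNdef]
      exact codisjoint_iff.mp hcompl.codisjoint
  -- decomposition
  have hdecomp : ∀ x : ℂ ⊗[ℝ] V, ∃ l l' m, l ∈ L ∧ l' ∈ L' ∧ m ∈ M ∧ x = l + l' + m := by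
    intro x
    have hx : x ∈ L ⊔ (L' ⊔ M) := by
      rw [codisjoint_iff.mp hcomplL.codisjoint]; trivial
    obtain ⟨l, hl, z, hz, rfl⟩ := Submodule.mem_sup.mp hx
    obtain ⟨l', hl', m, hm, rfl⟩ := Submodule.mem_sup.mp hz
    exact ⟨l, l', m, hl, hl', hm, by abel⟩
  -- the projection and P
  set πL : ℂ ⊗[ℝ] V →ₗ[ℂ] ℂ ⊗[ℝ] V :=
    L.subtype ∘ₗ (L.projectionOnto (L' ⊔ M) hcomplL) with hπLdef
  have hπL1 : ∀ x ∈ L, πL x = x := by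
    intro x hx
    simp only [hπLdef, LinearMap.comp_apply, Submodule.coe_subtype]
    rw [Submodule.projectionOnto_apply_left hcomplL ⟨x, hx⟩]
  have hπL2 : ∀ x ∈ L' ⊔ M, πL x = 0 := by
    intro x hx
    simp only [hπLdef, LinearMap.comp_apply, Submodule.coe_subtype]
    rw [Submodule.projectionOnto_apply_right hcomplL ⟨x, hx⟩]
    rfl
  have hπLmem : ∀ x, πL x ∈ L := by
    intro x
    simp only [hπLdef, LinearMap.comp_apply, Submodule.coe_subtype]
    exact Submodule.coe_mem _
  set P : ℂ ⊗[ℝ] V →ₗ[ℝ] ℂ ⊗[ℝ] V :=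
    ((Complex.I • πL).restrictScalars ℝ) +
      (conjExt V) ∘ₗ ((Complex.I • πL).restrictScalars ℝ) ∘ₗ (conjExt V) with hPdef
  have hPapply : ∀ x, P x = Complex.I • πL x + conjExt V (Complex.I • πL (conjExt V x)) := by
    intro x
    simp [hPdef]
  have hPl : ∀ x ∈ L, P x = Complex.I • x := by
    intro x hx
    rw [hPapply, hπL1 x hx, hπL2 (conjExt V x) (le_sup_left (α := Submodule ℂ (ℂ ⊗[ℝ] V)) (hcL x hx))]
    simp
  have hPl' : ∀ x ∈ L', P x = (-Complex.I) • x := by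
    intro x hx
    rw [hPapply, hπL2 x (le_sup_left (α := Submodule ℂ (ℂ ⊗[ℝ] V)) hx),
      hπL1 (conjExt V x) (hcL' x hx), conjExt_smul, conjExt_conjExt]
    simp
  have hPm : ∀ x ∈ M, P x = 0 := by
    intro x hx
    rw [hPapply, hπL2 x (le_sup_right (α := Submodule ℂ (ℂ ⊗[ℝ] V)) hx),
      hπL2 (conjExt V x) (le_sup_right (α := Submodule ℂ (ℂ ⊗[ℝ] V)) (hMc x hx))]
    simp
  have hPsmul : ∀ (z : ℂ) x, P (z • x) = z • P x := by
    intro z x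
    rw [hPapply, hPapply, conjExt_smul V z x, πL.map_smul, πL.map_smul,
      smul_comm Complex.I z (πL x), smul_comm Complex.I (starRingEnd ℂ z) (πL (conjExt V x)),
      conjExt_smul]
    simp [smul_add]
  have hPc : ∀ x, conjExt V (P x) = P (conjExt V x) := by
    intro x
    rw [hPapply, hPapply, map_add, conjExt_conjExt, conjExt_conjExt]
    exact add_comm _ _
  have hPN : ∀ x, P x ∈ N := by
    intro x
    rw [hPapply]
    refine N.add_mem (hLN (L.smul_mem _ (hπLmem x))) (hL'N (hcL _ (L.smul_mem _ (hπLmem _))))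
  -- the real operator
  set F : V →ₗ[ℝ] V := (reV V) ∘ₗ P ∘ₗ (TensorProduct.mk ℝ ℂ V 1) with hFdef
  have hFapply : ∀ v : V, F v = reV V (P ((1:ℂ) ⊗ₜ[ℝ] v)) := fun v => rfl
  have hfix : ∀ v : V, conjExt V ((1:ℂ) ⊗ₜ[ℝ] v) = (1:ℂ) ⊗ₜ[ℝ] v := by
    intro v; simp
  have hFP : ∀ v : V, (1:ℂ) ⊗ₜ[ℝ] F v = P ((1:ℂ) ⊗ₜ[ℝ] v) := by
    intro v
    rw [hFapply]
    apply conjExt_fixed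
    rw [hPc, hfix]
  have hreV1 : ∀ v : V, reV V ((1:ℂ) ⊗ₜ[ℝ] v) = v := by
    intro v; simp
  have hbase : ∀ x, LinearMap.baseChange ℂ F x = P x := by
    intro x
    induction x using TensorProduct.induction_on with
    | zero => simp
    | tmul z v =>
        rw [LinearMap.baseChange_tmul]
        have h1 : z ⊗ₜ[ℝ] F v = z • ((1:ℂ) ⊗ₜ[ℝ] F v) := by
          rw [TensorProduct.smul_tmul']; norm_num
        have h2 : z ⊗ₜ[ℝ] v = z • ((1:ℂ) ⊗ₜ[ℝ] v) := by
          rw [TensorProduct.smul_tmul']; norm_num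
        rw [h1, hFP, h2, hPsmul]
    | add a b ha hb => rw [map_add, map_add, ha, hb]

  -- P cubed
  have hP3 : ∀ x, P (P (P x)) + P x = 0 := by
    intro x
    obtain ⟨l, l', m, hl, hl', hm, rfl⟩ := hdecomp x
    have e1 : P (l + l' + m) = Complex.I • l + (-Complex.I) • l' := by
      rw [map_add, map_add, hPl l hl, hPl' l' hl', hPm m hm, add_zero]
    have e2 : P (P (l + l' + m)) = -l - l' := by
      rw [e1, map_add, hPsmul, hPsmul, hPl l hl, hPl' l' hl', smul_smul, smul_smul]
      simp [Complex.I_mul_I]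
      abel
    have e3 : P (P (P (l + l' + m))) = -(Complex.I • l) - (-Complex.I) • l' := by
      rw [e2, sub_eq_add_neg, map_add, map_neg, map_neg, hPl l hl, hPl' l' hl']
      abel
    rw [e3, e1]
    abel
  -- skew-adjointness of P w.r.t. the bilinear form
  have hBskew : ∀ u v, bilinExt V (P u) v = -(bilinExt V u (P v)) := by
    intro u v
    obtain ⟨l1, l1', m1, hl1, hl1', hm1, rfl⟩ := hdecomp u
    obtain ⟨l2, l2', m2, hl2, hl2', hm2, rfl⟩ := hdecomp v
    have hisoL' : ∀ a ∈ L', ∀ b ∈ L', bilinExt V a b = 0 := by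
      intro a ha b hb
      have h1 := bilinExt_conj V (conjExt V a) (conjExt V b)
      rw [conjExt_conjExt, conjExt_conjExt] at h1
      rw [h1, hiso _ (hcL' a ha) _ (hcL' b hb), map_zero]
    have eu : P (l1 + l1' + m1) = Complex.I • l1 + (-Complex.I) • l1' := by
      rw [map_add, map_add, hPl _ hl1, hPl' _ hl1', hPm _ hm1, add_zero]
    have ev : P (l2 + l2' + m2) = Complex.I • l2 + (-Complex.I) • l2' := by
      rw [map_add, map_add, hPl _ hl2, hPl' _ hl2', hPm _ hm2, add_zero]
    rw [eu, ev]
    have z11 := hiso _ hl1 _ hl2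
    have z1'1' := hisoL' _ hl1' _ hl2'
    have z1m := hBNM _ (hLN hl1) _ hm2
    have z1'm := hBNM _ (hL'N hl1') _ hm2
    have zm1 := hBMN _ hm1 _ (hLN hl2)
    have zm1' := hBMN _ hm1 _ (hL'N hl2')
    simp only [map_add, map_smul, LinearMap.add_apply, LinearMap.smul_apply, smul_eq_mul,
      map_neg, LinearMap.neg_apply, neg_mul, neg_smul]
    rw [z11, z1'1', z1m, z1'm, zm1, zm1']
    ring
  -- eigenspace
  have heig : Module.End.eigenspace (LinearMap.baseChange ℂ F) Complex.I = L := by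
    ext x
    rw [Module.End.mem_eigenspace_iff, hbase]
    constructor
    · intro h
      obtain ⟨l, l', m, hl, hl', hm, rfl⟩ := hdecomp x
      rw [map_add, map_add, hPl _ hl, hPl' _ hl', hPm _ hm, add_zero] at h
      have key : ((2:ℂ) • l' + m) = 0 := by
        have h2 := congrArg (fun y => (-Complex.I) • y) h
        simp only [smul_add, smul_smul, neg_mul, Complex.I_mul_I, neg_neg, one_smul,
          mul_neg, neg_smul, smul_neg] at h2
        linear_combination (norm := module) -h2
      have hl'0 : (2:ℂ) • l' = 0 := by
        have h1 : ((2:ℂ) • l') ∈ L' := L'.smul_mem _ hl'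
        have h2 : ((2:ℂ) • l') = -m := by linear_combination (norm := module) key
        have h3 : ((2:ℂ) • l') ∈ M := h2 ▸ M.neg_mem hm
        exact (Submodule.disjoint_def.mp hdisjL'M) _ h1 h3
      have hm0 : m = 0 := by
        have := key
        rw [hl'0, zero_add] at this
        exact this
      have hl'00 : l' = 0 := (smul_eq_zero.mp hl'0).resolve_left (by norm_num)
      rw [hl'00, hm0, add_zero, add_zero]
      exact hl
    · intro hx
      rw [hPl _ hx]
  -- rank
  have hrange : LinearMap.range F = (N.restrictScalars ℝ).comap (TensorProduct.mk ℝ ℂ V 1) := by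
    ext v
    constructor
    · rintro ⟨w, rfl⟩
      have : (1:ℂ) ⊗ₜ[ℝ] F w ∈ N := by
        rw [hFP]; exact hPN _
      exact this
    · intro hv
      have hv' : (1:ℂ) ⊗ₜ[ℝ] v ∈ N := hv
      obtain ⟨l, hl, y, hy, hxy⟩ := Submodule.mem_sup.mp hv'
      have hfix2 : conjExt V ((1:ℂ) ⊗ₜ[ℝ] v) = (1:ℂ) ⊗ₜ[ℝ] v := hfix v
      have hcly : conjExt V l + conjExt V y = l + y := by
        rw [← map_add, hxy, hfix2]
      have hswap : (conjExt V y - l) + (conjExt V l - y) = 0 := by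
        linear_combination (norm := module) hcly
      have h1 : conjExt V y - l ∈ L := L.sub_mem (hcL' y hy) hl
      have h2 : conjExt V l - y ∈ L' := L'.sub_mem (hcL l hl) hy
      have hcy : conjExt V y = l := by
        have ha : conjExt V y - l = -(conjExt V l - y) := by
          linear_combination (norm := module) hswap
        have hb : conjExt V y - l ∈ L' := ha ▸ L'.neg_mem h2
        have := (Submodule.disjoint_def.mp hdisjLL') _ h1 hb
        have := sub_eq_zero.mp this
        exact this
      have hcl : conjExt V l = y := by
        rw [← hcy, conjExt_conjExt]
      set u := (-Complex.I) • l + Complex.I • y with hudef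
      have hufix : conjExt V u = u := by
        rw [hudef, map_add, conjExt_smul, conjExt_smul, hcl, hcy]
        simp only [map_neg, Complex.conj_I, neg_neg, neg_smul]
        abel
      have hueq : (1:ℂ) ⊗ₜ[ℝ] reV V u = u := conjExt_fixed hufix
      refine ⟨reV V u, ?_⟩
      have hPu : P u = l + y := by
        rw [hudef, map_add, hPsmul, hPsmul, hPl _ hl, hPl' _ hy, smul_smul, smul_smul]
        norm_num [Complex.I_mul_I]
      have : (1:ℂ) ⊗ₜ[ℝ] F (reV V u) = (1:ℂ) ⊗ₜ[ℝ] v := by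
        rw [hFP, hueq, hPu, hxy]
      have := congrArg (reV V) this
      rwa [hreV1, hreV1] at this
  have hrank : finrank ℝ (LinearMap.range F) = 2 * finrank ℂ L := by
    rw [hrange, finrank_fix V N hNc]
    have hsum := Submodule.finrank_sup_add_finrank_inf_eq L L'
    rw [hdisjLL'.eq_bot, finrank_bot, add_zero] at hsum
    rw [hNdef, hsum, hL'def, finrank_conjSub]
    ring
    -- cube property for F
  have hF3 : ∀ x, F (F (F x)) + F x = 0 := by
    intro x
    have h1 : (1:ℂ) ⊗ₜ[ℝ] (F (F (F x)) + F x) = 0 := by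
      rw [TensorProduct.tmul_add, hFP, hFP, hFP]
      exact hP3 _
    have := congrArg (reV V) h1
    rwa [hreV1, map_zero] at this
  -- skewness for F
  have hFskew : ∀ x y, ⟪F x, y⟫ = -⟪x, F y⟫ := by
    intro x y
    have h := hBskew ((1:ℂ) ⊗ₜ[ℝ] x) ((1:ℂ) ⊗ₜ[ℝ] y)
    rw [← hFP, ← hFP, bilinExt_real, bilinExt_real] at h
    exact_mod_cast h
  refine ⟨F, ⟨hF3, hFskew, hrank, heig⟩, ?_⟩
  -- uniqueness
  rintro F' ⟨h1, h2, _h3, h4⟩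
  set G := LinearMap.baseChange ℂ F' with hGdef
  have hGc : ∀ x, conjExt V (G x) = G (conjExt V x) := by
    intro x
    induction x using TensorProduct.induction_on with
    | zero => simp
    | tmul z v => rw [hGdef, LinearMap.baseChange_tmul, conjExt_tmul, conjExt_tmul,
        LinearMap.baseChange_tmul]
    | add a b ha hb => rw [map_add, map_add, map_add, map_add, ha, hb]
  have hG3 : ∀ x, G (G (G x)) + G x = 0 := by
    intro x
    induction x using TensorProduct.induction_on with
    | zero => simp
    | tmul z v =>
        rw [hGdef, LinearMap.baseChange_tmul, LinearMap.baseChange_tmul,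
          LinearMap.baseChange_tmul, ← TensorProduct.tmul_add, h1 v, TensorProduct.tmul_zero]
    | add a b ha hb =>
        rw [map_add, map_add, map_add]
        rw [show G (G (G a)) + G (G (G b)) + (G a + G b)
          = (G (G (G a)) + G a) + (G (G (G b)) + G b) by abel, ha, hb, add_zero]
  have hGskew : ∀ u v, bilinExt V (G u) v = -(bilinExt V u (G v)) := by
    intro u v
    induction u using TensorProduct.induction_on with
    | zero => simp
    | tmul z x =>
        induction v using TensorProduct.induction_on with
        | zero => simp
        | tmul w y =>
            rw [hGdef, LinearMap.baseChange_tmul, LinearMap.baseChange_tmul,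
              bilinExt_tmul, bilinExt_tmul, h2 x y, ← neg_smul]
        | add a b ha hb =>
            rw [map_add, map_add, map_add, ha, hb, neg_add]
    | add a b ha hb =>
        rw [map_add, map_add, map_add, LinearMap.add_apply, LinearMap.add_apply, ha, hb, neg_add]
  have hGL : ∀ x ∈ L, G x = Complex.I • x := by
    intro x hx
    rw [← h4] at hx
    exact Module.End.mem_eigenspace_iff.mp hx
  have hGL' : ∀ x ∈ L', G x = (-Complex.I) • x := by
    intro x hx
    have h5 : G (conjExt V x) = Complex.I • conjExt V x := hGL _ (hcL' x hx)
    have h6 := congrArg (conjExt V) h5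
    rw [← hGc, conjExt_conjExt, conjExt_smul, conjExt_conjExt] at h6
    rw [h6]
    simp
  have hGN : ∀ n ∈ N, G n ∈ N := by
    intro n hn
    obtain ⟨a, ha, b, hb, rfl⟩ := Submodule.mem_sup.mp hn
    rw [map_add]
    exact N.add_mem (hLN (by rw [hGL a ha]; exact L.smul_mem _ ha))
      (hL'N (by rw [hGL' b hb]; exact L'.smul_mem _ hb))
  have hGM : ∀ x ∈ M, G x ∈ M := by
    intro x hx
    rw [hMmem]
    intro n hn
    rw [bilinExt_symm V n (G x), hGskew x n, bilinExt_symm V x (G n),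
      hBNM _ (hGN n hn) _ hx, neg_zero]
  have hGM0 : ∀ x ∈ M, G x = 0 := by
    intro m hm
    set z := G m with hz
    have hzM : z ∈ M := hGM m hm
    have hz2 : G (G z) = -z := by
      have h5 := hG3 m
      rw [← hz] at h5
      linear_combination (norm := module) h5
    set w := G z + Complex.I • z with hw
    have hwM : w ∈ M := M.add_mem (hGM z hzM) (M.smul_mem _ hzM)
    have hGw : G w = Complex.I • w := by
      rw [hw, map_add, G.map_smul, hz2, smul_add, smul_smul, Complex.I_mul_I, neg_one_smul]
      abel
    have hwL : w ∈ L := by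
      rw [← h4]
      exact Module.End.mem_eigenspace_iff.mpr hGw
    have hw0 : w = 0 := Submodule.disjoint_def.mp hdisjLM w hwL hwM
    have hGz : G z = (-Complex.I) • z := by
      rw [hw] at hw0
      linear_combination (norm := module) hw0
    have hczM : conjExt V z ∈ M := hMc z hzM
    have hGcz : G (conjExt V z) = Complex.I • conjExt V z := by
      rw [← hGc, hGz, conjExt_smul]
      simp
    have hczL : conjExt V z ∈ L := by
      rw [← h4]
      exact Module.End.mem_eigenspace_iff.mpr hGcz
    have hcz0 : conjExt V z = 0 := Submodule.disjoint_def.mp hdisjLM _ hczL hczM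
    have hz0 : z = 0 := by
      have := congrArg (conjExt V) hcz0
      rwa [conjExt_conjExt, map_zero] at this
    exact hz0
  have hGP : ∀ x, G x = P x := by
    intro x
    obtain ⟨l, l', m, hl, hl', hm, rfl⟩ := hdecomp x
    rw [map_add, map_add, map_add, map_add, hGL l hl, hGL' l' hl', hGM0 m hm,
      hPl l hl, hPl' l' hl', hPm m hm]
  ext v
  have h5 : (1:ℂ) ⊗ₜ[ℝ] F' v = (1:ℂ) ⊗ₜ[ℝ] F v := by
    have h6 : (1:ℂ) ⊗ₜ[ℝ] F' v = G ((1:ℂ) ⊗ₜ[ℝ] v) := by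
      rw [hGdef, LinearMap.baseChange_tmul]
    rw [h6, hGP, ← hFP]
  have := congrArg (reV V) h5
  rwa [hreV1, hreV1] at this
end

section
/- Let φ : V → W be a surjective linear map of finite-dimensional real inner product spaces, J a compatible complex structure on (W, h). Define F on V by F = 0 on Ker φ and F(X) = (φ|_H)⁻¹(J φ(X)) for X in the orthogonal complement H of Ker φ. Then F³ + F = 0, and F is skew-adjoint with respect to g if and only if φ satisfies the PHWC condition J ∘ [φ ∘ φᵗ, J] = 0. -/
open scoped RealInnerProductSpace
open Module

/-- let `φ : V → W` be a surjective linear map, `J` a compatible complex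
structure on `W`, and `F` the endomorphism of `V` vanishing on `Ker φ` and equal to
`(φ|_H)⁻¹ ∘ J ∘ φ` on the horizontal space `H = (Ker φ)ᗮ` (i.e. `F` maps `H` to `H` and
`φ (F x) = J (φ x)` there).  Then `F³ + F = 0`, and `F` is skew-adjoint if and only if
`φ` satisfies the PHWC condition `J ∘ [φφᵗ, J] = 0`. -/
theorem induced_f_structure_of_submersion
    (V W : Type*) [NormedAddCommGroup V] [InnerProductSpace ℝ V] [FiniteDimensional ℝ V]
    [NormedAddCommGroup W] [InnerProductSpace ℝ W] [FiniteDimensional ℝ W]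
    (φ : V →ₗ[ℝ] W) (hsurj : Function.Surjective φ)
    (J : W →ₗ[ℝ] W)
    (hJ2 : ∀ w, J (J w) = -w)
    (hJskew : ∀ w w', ⟪J w, w'⟫ = -⟪w, J w'⟫)
    (F : V →ₗ[ℝ] V)
    (hFker : ∀ x ∈ LinearMap.ker φ, F x = 0)
    (hFhor : ∀ x ∈ (LinearMap.ker φ)ᗮ, F x ∈ (LinearMap.ker φ)ᗮ ∧ φ (F x) = J (φ x)) :
    (∀ x, F (F (F x)) + F x = 0) ∧
    ((∀ x y, ⟪F x, y⟫ = -⟪x, F y⟫) ↔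
      J ∘ₗ ((φ ∘ₗ LinearMap.adjoint φ) ∘ₗ J - J ∘ₗ (φ ∘ₗ LinearMap.adjoint φ)) = 0) := by
  set K := LinearMap.ker φ with hK
  set A := LinearMap.adjoint φ with hA
  have hadj : ∀ (u : W) (x : V), ⟪A u, x⟫ = ⟪u, φ x⟫ :=
    fun u x => LinearMap.adjoint_inner_left φ x u
  have hadj2 : ∀ (x : V) (u : W), ⟪φ x, u⟫ = ⟪x, A u⟫ :=
    fun x u => (LinearMap.adjoint_inner_right φ x u).symm
  -- global facts about F
  have hFmem : ∀ x, F x ∈ Kᗮ := by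
    intro x
    obtain ⟨k, hk, h, hh, rfl⟩ := K.exists_add_mem_mem_orthogonal x
    rw [map_add, hFker k hk, zero_add]
    exact (hFhor h hh).1
  have hFφ : ∀ x, φ (F x) = J (φ x) := by
    intro x
    obtain ⟨k, hk, h, hh, rfl⟩ := K.exists_add_mem_mem_orthogonal x
    rw [map_add, hFker k hk, zero_add, (hFhor h hh).2, map_add,
      LinearMap.mem_ker.mp hk, zero_add]
  -- an element of both K and Kᗮ is zero
  have hzero : ∀ z : V, z ∈ K → z ∈ Kᗮ → z = 0 := by
    intro z hz hz'
    have := (Submodule.mem_orthogonal K z).mp hz' z hz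
    exact inner_self_eq_zero.mp this
  -- part 1
  have part1 : ∀ x, F (F (F x)) + F x = 0 := by
    intro x
    refine hzero _ ?_ ?_
    · rw [LinearMap.mem_ker, map_add, hFφ, hFφ, hFφ, hJ2, neg_add_cancel]
    · exact Submodule.add_mem _ (hFmem _) (hFmem _)
  refine ⟨part1, ?_⟩
  -- range of the adjoint
  have hmemA : ∀ u : W, A u ∈ Kᗮ := by
    intro u
    rw [Submodule.mem_orthogonal]
    intro k hk
    rw [real_inner_comm, hadj, LinearMap.mem_ker.mp hk, inner_zero_right]
  have hrange : ∀ h ∈ Kᗮ, ∃ u, A u = h := by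
    have hle : (LinearMap.range A)ᗮ ≤ K := by
      intro x hx
      rw [LinearMap.mem_ker]
      have h0 : ∀ u : W, ⟪φ x, u⟫ = 0 := by
        intro u
        rw [real_inner_comm, ← hadj]
        exact (Submodule.mem_orthogonal _ x).mp hx _ ⟨u, rfl⟩
      exact ext_inner_right ℝ (fun v => by rw [h0, inner_zero_left])
    intro h hh
    have h1 : Kᗮ ≤ (LinearMap.range A)ᗮᗮ := Submodule.orthogonal_le hle
    have h2 := h1 hh
    rw [Submodule.orthogonal_orthogonal] at h2
    exact h2
  constructor
  · -- skew → PHWC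
    intro hskew
    ext w
    have hcomm : ∀ u : W, φ (A (J u)) = J (φ (A u)) := by
      intro u
      refine ext_inner_right ℝ (fun v => ?_)
      calc ⟪φ (A (J u)), v⟫
          = ⟪A (J u), A v⟫ := hadj2 _ _
        _ = ⟪J u, φ (A v)⟫ := hadj _ _
        _ = -⟪u, J (φ (A v))⟫ := hJskew _ _
        _ = -⟪u, φ (F (A v))⟫ := by rw [hFφ]
        _ = -⟪A u, F (A v)⟫ := by rw [hadj]
        _ = ⟪F (A u), A v⟫ := (hskew _ _).symm
        _ = ⟪φ (F (A u)), v⟫ := (hadj2 _ _).symm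
        _ = ⟪J (φ (A u)), v⟫ := by rw [hFφ]
    simp only [LinearMap.comp_apply, LinearMap.sub_apply, LinearMap.zero_apply]
    rw [hcomm w, sub_self, map_zero]
  · -- PHWC → skew
    intro hphwc
    have hcomm : ∀ u : W, φ (A (J u)) = J (φ (A u)) := by
      intro u
      have h1 := congrArg (fun f => f u) hphwc
      simp only [LinearMap.comp_apply, LinearMap.sub_apply, LinearMap.zero_apply, ← hA] at h1
      have h2 := congrArg J h1
      rw [hJ2, map_zero, neg_eq_zero, sub_eq_zero] at h2
      exact h2
    -- F on the range of the adjoint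
    have hFadj : ∀ v : W, F (A v) = A (J v) := by
      intro v
      have hker : F (A v) - A (J v) ∈ K := by
        rw [LinearMap.mem_ker, map_sub, hFφ, hcomm, sub_self]
      have := hzero _ hker (Submodule.sub_mem _ (hFmem _) (hmemA _))
      rwa [sub_eq_zero] at this
    intro x y
    obtain ⟨kx, hkx, hx, hhx, rfl⟩ := K.exists_add_mem_mem_orthogonal x
    obtain ⟨ky, hky, hy, hhy, rfl⟩ := K.exists_add_mem_mem_orthogonal y
    have hFx : F (kx + hx) = F hx := by rw [map_add, hFker kx hkx, zero_add]
    have hFy : F (ky + hy) = F hy := by rw [map_add, hFker ky hky, zero_add]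
    rw [hFx, hFy]
    have e1 : ⟪F hx, ky + hy⟫ = ⟪F hx, hy⟫ := by
      rw [inner_add_right, ← real_inner_comm (F hx) ky,
        (Submodule.mem_orthogonal K _).mp (hFmem hx) ky hky, zero_add]
    have e2 : ⟪kx + hx, F hy⟫ = ⟪hx, F hy⟫ := by
      rw [inner_add_left,
        (Submodule.mem_orthogonal K _).mp (hFmem hy) kx hkx, zero_add]
    rw [e1, e2]
    obtain ⟨u, rfl⟩ := hrange hx hhx
    obtain ⟨v, rfl⟩ := hrange hy hhy
    rw [hFadj, hFadj, hadj, hadj, hJskew, ← hcomm]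
end

section
/- Let φ : V → W be a linear map between real inner product spaces, W with compatible complex structure J, satisfying the PHWC condition J ∘ [φφᵗ, J] = 0, and let F be the induced metric almost f-structure on V with Ker(F − i) = φᵗ(W^{1,0}). Then φ is holomorphic in the f-structure sense: φ(Ker F_ℂ ⊕ Ker(F + i)) ⊆ Ker(J + i), equivalently φ(F X) − J φ(X) = 0 for all X (since Ker J = 0). -/
open scoped TensorProduct RealInnerProductSpace
open Module

/-- a PHWC linear map `φ : V → W` is holomorphic with respect to the induced
metric almost f-structure `F` on `V` (characterized by `Ker(F - i) = φᵗ(W^{1,0})`):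
the complexified `φ` maps `Ker F_ℂ ⊕ Ker(F + i)` into `Ker(J + i)`, and
`φ (F x) = J (φ x)` for all `x`. -/
theorem phwc_is_holomorphic
    (V W : Type*) [NormedAddCommGroup V] [InnerProductSpace ℝ V] [FiniteDimensional ℝ V]
    [NormedAddCommGroup W] [InnerProductSpace ℝ W] [FiniteDimensional ℝ W]
    (φ : V →ₗ[ℝ] W) (J : W →ₗ[ℝ] W)
    (hJ2 : ∀ w, J (J w) = -w)
    (hJskew : ∀ w w', ⟪J w, w'⟫ = -⟪w, J w'⟫)
    (hPHWC : J ∘ₗ ((φ ∘ₗ LinearMap.adjoint φ) ∘ₗ J - J ∘ₗ (φ ∘ₗ LinearMap.adjoint φ)) = 0)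
    (F : V →ₗ[ℝ] V)
    (hF3 : ∀ x, F (F (F x)) + F x = 0)
    (hFskew : ∀ x y, ⟪F x, y⟫ = -⟪x, F y⟫)
    (heig : Module.End.eigenspace (LinearMap.baseChange ℂ F) Complex.I =
      Submodule.map (LinearMap.baseChange ℂ (LinearMap.adjoint φ))
        (Module.End.eigenspace (LinearMap.baseChange ℂ J) Complex.I)) :
    Submodule.map (LinearMap.baseChange ℂ φ)
        (Module.End.eigenspace (LinearMap.baseChange ℂ F) 0 ⊔
          Module.End.eigenspace (LinearMap.baseChange ℂ F) (-Complex.I)) ≤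
      Module.End.eigenspace (LinearMap.baseChange ℂ J) (-Complex.I) ∧
    (∀ x, φ (F x) = J (φ x)) := by
  set P := LinearMap.adjoint φ with hPdef
  -- real part extraction map
  set r : ℂ ⊗[ℝ] V →ₗ[ℝ] V :=
    (TensorProduct.lid ℝ V).toLinearMap ∘ₗ
      TensorProduct.map Complex.reLm LinearMap.id with hrdef
  have hr_tmul : ∀ (z : ℂ) (v : V), r (z ⊗ₜ[ℝ] v) = z.re • v := by
    intro z v
    simp [hrdef, TensorProduct.map_tmul, TensorProduct.lid_tmul]
  -- Key real identity: F ∘ P = P ∘ J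
  have key : ∀ w : W, F (P w) = P (J w) := by
    intro w
    have hu : ((1 : ℂ) ⊗ₜ[ℝ] w - Complex.I • ((1 : ℂ) ⊗ₜ[ℝ] (J w)) : ℂ ⊗[ℝ] W) ∈
        Module.End.eigenspace (LinearMap.baseChange ℂ J) Complex.I := by
      rw [Module.End.mem_eigenspace_iff]
      simp only [map_sub, LinearMap.map_smul, LinearMap.baseChange_tmul, hJ2 w,
        TensorProduct.tmul_neg, smul_sub, smul_smul, Complex.I_mul_I, smul_neg,
        neg_smul, one_smul, sub_neg_eq_add]
      abel
    have hmem : LinearMap.baseChange ℂ P ((1 : ℂ) ⊗ₜ[ℝ] w - Complex.I • ((1 : ℂ) ⊗ₜ[ℝ] (J w))) ∈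
        Module.End.eigenspace (LinearMap.baseChange ℂ F) Complex.I := by
      rw [heig]; exact Submodule.mem_map_of_mem hu
    rw [Module.End.mem_eigenspace_iff] at hmem
    have := congrArg r hmem
    simp only [map_sub, LinearMap.map_smul, LinearMap.baseChange_tmul,
      TensorProduct.smul_tmul', smul_eq_mul, mul_one] at this
    simp only [smul_sub, TensorProduct.smul_tmul', smul_eq_mul, mul_one, smul_smul,
      Complex.I_mul_I, map_sub, hr_tmul, Complex.I_re, Complex.one_re, Complex.neg_re,
      zero_smul, one_smul, neg_neg, sub_zero, zero_sub, neg_smul] at this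
    simpa using this
  -- Real identity φ ∘ F = J ∘ φ
  have hreal : ∀ x, φ (F x) = J (φ x) := by
    intro x
    have h : ∀ w, ⟪φ (F x) - J (φ x), w⟫ = 0 := by
      intro w
      rw [inner_sub_left]
      have h1 : ⟪φ (F x), w⟫ = ⟪F x, P w⟫ := (LinearMap.adjoint_inner_right φ (F x) w).symm
      have h2 : ⟪φ x, J w⟫ = ⟪x, P (J w)⟫ := (LinearMap.adjoint_inner_right φ x (J w)).symm
      rw [h1, hFskew, key, ← h2, ← neg_neg ⟪φ x, J w⟫, ← hJskew]
      ring
    have := h (φ (F x) - J (φ x))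
    rw [inner_self_eq_zero] at this
    exact sub_eq_zero.mp this
  refine ⟨?_, hreal⟩
  have hcomp : ∀ v : ℂ ⊗[ℝ] V,
      LinearMap.baseChange ℂ φ (LinearMap.baseChange ℂ F v) =
        LinearMap.baseChange ℂ J (LinearMap.baseChange ℂ φ v) := by
    intro v
    have h1 : φ ∘ₗ F = J ∘ₗ φ := LinearMap.ext hreal
    have h2 := congrArg (LinearMap.baseChange ℂ) h1
    rw [LinearMap.baseChange_comp, LinearMap.baseChange_comp] at h2
    exact DFunLike.congr_fun h2 v
  have hJ2c : ∀ u : ℂ ⊗[ℝ] W,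
      LinearMap.baseChange ℂ J (LinearMap.baseChange ℂ J u) = -u := by
    intro u
    have h1 : J ∘ₗ J = -LinearMap.id := by ext w; simp [hJ2 w]
    have h2 := congrArg (LinearMap.baseChange ℂ) h1
    rw [LinearMap.baseChange_comp] at h2
    have := DFunLike.congr_fun h2 u
    simpa using this
  rw [Submodule.map_sup, sup_le_iff]
  constructor
  · rintro x ⟨v, hv, rfl⟩
    rw [SetLike.mem_coe, Module.End.mem_eigenspace_iff] at hv
    rw [Module.End.mem_eigenspace_iff]
    have h0 : LinearMap.baseChange ℂ J (LinearMap.baseChange ℂ φ v) = 0 := by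
      rw [← hcomp, hv]; simp
    have hz : LinearMap.baseChange ℂ φ v = 0 := by
      have h3 := congrArg (LinearMap.baseChange ℂ J) h0
      rw [hJ2c] at h3; simpa using h3
    rw [hz]; simp
  · rintro x ⟨v, hv, rfl⟩
    rw [SetLike.mem_coe, Module.End.mem_eigenspace_iff] at hv
    rw [Module.End.mem_eigenspace_iff]
    rw [← hcomp, hv, LinearMap.map_smul]
end

section
/- Let φ : V → W be a linear map between real inner product spaces, where V carries a skew-adjoint endomorphism ϕ with ϕ³ + ϕ = 0 and W carries a compatible complex structure J, such that φ ∘ ϕ = J ∘ φ ((ϕ,J)-holomorphicity). Then φ satisfies the PHWC condition J ∘ [φφᵗ, J] = 0. -/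
open scoped RealInnerProductSpace

/-- a `(ϕ, J)`-holomorphic linear map (`φ ∘ ϕ = J ∘ φ`) from a space with a
metric almost f-structure `ϕ` to a space with a compatible complex structure `J` satisfies
the PHWC condition `J ∘ [φφᵗ, J] = 0`. -/
theorem phi_J_holomorphic_is_phwc
    (V W : Type*) [NormedAddCommGroup V] [InnerProductSpace ℝ V] [FiniteDimensional ℝ V]
    [NormedAddCommGroup W] [InnerProductSpace ℝ W] [FiniteDimensional ℝ W]
    (φ : V →ₗ[ℝ] W) (ϕ : V →ₗ[ℝ] V) (J : W →ₗ[ℝ] W)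
    (hϕ3 : ∀ x, ϕ (ϕ (ϕ x)) + ϕ x = 0)
    (hϕskew : ∀ x y, ⟪ϕ x, y⟫ = -⟪x, ϕ y⟫)
    (hJ2 : ∀ w, J (J w) = -w)
    (hJskew : ∀ w w', ⟪J w, w'⟫ = -⟪w, J w'⟫)
    (hhol : φ ∘ₗ ϕ = J ∘ₗ φ) :
    J ∘ₗ ((φ ∘ₗ LinearMap.adjoint φ) ∘ₗ J - J ∘ₗ (φ ∘ₗ LinearMap.adjoint φ)) = 0 := by
  have hhol' : ∀ v, φ (ϕ v) = J (φ v) := fun v => congrFun (congrArg DFunLike.coe hhol) v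
  have key : ∀ w, LinearMap.adjoint φ (J w) = ϕ (LinearMap.adjoint φ w) := by
    intro w
    apply ext_inner_left ℝ
    intro v
    have h1 := hJskew (φ v) w
    have h2 := hϕskew v (LinearMap.adjoint φ w)
    calc ⟪v, LinearMap.adjoint φ (J w)⟫ = ⟪φ v, J w⟫ := LinearMap.adjoint_inner_right φ v (J w)
      _ = -⟪J (φ v), w⟫ := by linarith
      _ = -⟪φ (ϕ v), w⟫ := by rw [hhol']
      _ = -⟪ϕ v, LinearMap.adjoint φ w⟫ := by rw [LinearMap.adjoint_inner_right]
      _ = ⟪v, ϕ (LinearMap.adjoint φ w)⟫ := by rw [hϕskew]; ring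
  ext w
  simp only [LinearMap.comp_apply, LinearMap.sub_apply, LinearMap.zero_apply, LinearMap.map_sub]
  rw [key w, hhol']
  simp
end

section
/- Let φ : V → W be a surjective PHWC linear map (J[φφᵗ, J] = 0) with W carrying a compatible complex structure J, and let F be the induced f-structure on V. Then rank F = rank φ = dim W, and Ker F = Ker φ. -/
open scoped TensorProduct RealInnerProductSpace
open Module

section Aux

variable {M N : Type*} [AddCommGroup M] [Module ℝ M] [AddCommGroup N] [Module ℝ N]

/-- The "real part" map `ℂ ⊗[ℝ] M → M`. -/
noncomputable def reT (M : Type*) [AddCommGroup M] [Module ℝ M] :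
    ℂ ⊗[ℝ] M →ₗ[ℝ] M :=
  TensorProduct.lift ((LinearMap.lsmul ℝ M).comp Complex.reLm)

@[simp] lemma reT_tmul (c : ℂ) (m : M) : reT M (c ⊗ₜ m) = c.re • m := rfl

/-- Complex conjugation on `ℂ ⊗[ℝ] M`. -/
noncomputable def conjT (M : Type*) [AddCommGroup M] [Module ℝ M] :
    ℂ ⊗[ℝ] M →ₗ[ℝ] ℂ ⊗[ℝ] M :=
  TensorProduct.map Complex.conjAe.toLinearMap LinearMap.id

@[simp] lemma conjT_tmul (c : ℂ) (m : M) :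
    conjT M (c ⊗ₜ m) = (starRingEnd ℂ c) ⊗ₜ m := rfl

lemma reT_baseChange (f : M →ₗ[ℝ] N) (x : ℂ ⊗[ℝ] M) :
    reT N (f.baseChange ℂ x) = f (reT M x) := by
  induction x using TensorProduct.induction_on with
  | zero => simp
  | tmul c m => simp
  | add a b ha hb => simp [ha, hb]

lemma conjT_baseChange (f : M →ₗ[ℝ] N) (x : ℂ ⊗[ℝ] M) :
    conjT N (f.baseChange ℂ x) = f.baseChange ℂ (conjT M x) := by
  induction x using TensorProduct.induction_on with
  | zero => simp
  | tmul c m => simp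
  | add a b ha hb => simp [ha, hb]

@[simp] lemma conjT_conjT (x : ℂ ⊗[ℝ] M) : conjT M (conjT M x) = x := by
  induction x using TensorProduct.induction_on with
  | zero => simp
  | tmul c m => simp
  | add a b ha hb => simp [ha, hb]

lemma conjT_smul (a : ℂ) (x : ℂ ⊗[ℝ] M) :
    conjT M (a • x) = (starRingEnd ℂ a) • conjT M x := by
  induction x using TensorProduct.induction_on with
  | zero => simp
  | tmul c m => simp [TensorProduct.smul_tmul']
  | add u v hu hv => simp [smul_add, hu, hv]

/-- Decomposition of a vector killed by `G² + 1` into `i` and `-i` parts;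
the `-i` part is recorded through its conjugate, which lies in the `i`-eigenspace. -/
lemma decomp_eig (G : M →ₗ[ℝ] M) (x : ℂ ⊗[ℝ] M)
    (hx : G.baseChange ℂ (G.baseChange ℂ x) = -x) :
    ∃ u w, u ∈ Module.End.eigenspace (G.baseChange ℂ) Complex.I ∧
      conjT M w ∈ Module.End.eigenspace (G.baseChange ℂ) Complex.I ∧
      x = (1/2 : ℂ) • u + (1/2 : ℂ) • w := by
  set Gc := G.baseChange ℂ
  refine ⟨x - Complex.I • Gc x, x + Complex.I • Gc x, ?_, ?_, ?_⟩
  · rw [Module.End.mem_eigenspace_iff]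
    rw [map_sub, map_smul, hx]
    simp only [smul_sub, smul_smul, Complex.I_mul_I, smul_neg, neg_one_smul, neg_neg,
      sub_neg_eq_add]
    abel
  · have hw : Gc (x + Complex.I • Gc x) = (-Complex.I) • (x + Complex.I • Gc x) := by
      rw [map_add, map_smul, hx]
      simp only [smul_add, smul_smul, neg_mul, Complex.I_mul_I, neg_neg, one_smul,
        smul_neg, neg_smul]
      abel
    rw [Module.End.mem_eigenspace_iff, ← conjT_baseChange, hw, conjT_smul]
    simp
  · have h2 : (x - Complex.I • Gc x) + (x + Complex.I • Gc x) = (2 : ℂ) • x := by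
      rw [two_smul]; abel
    rw [← smul_add, h2, smul_smul]
    norm_num

lemma eig_mem_range (G : M →ₗ[ℝ] M) (x : ℂ ⊗[ℝ] M)
    (hx : x ∈ Module.End.eigenspace (G.baseChange ℂ) Complex.I) :
    x ∈ LinearMap.range (G.baseChange ℂ) := by
  rw [Module.End.mem_eigenspace_iff] at hx
  refine ⟨(-Complex.I) • x, ?_⟩
  rw [map_smul, hx, smul_smul, neg_mul, Complex.I_mul_I, neg_neg, one_smul]

end Aux

/-- for a surjective PHWC linear map `φ : V → W` with induced f-structure
`F` on `V`, one has `rank F = rank φ = dim W` and `Ker F = Ker φ`. -/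
theorem phwc_submersion_rank_ker
    (V W : Type*) [NormedAddCommGroup V] [InnerProductSpace ℝ V] [FiniteDimensional ℝ V]
    [NormedAddCommGroup W] [InnerProductSpace ℝ W] [FiniteDimensional ℝ W]
    (φ : V →ₗ[ℝ] W) (hsurj : Function.Surjective φ)
    (J : W →ₗ[ℝ] W)
    (hJ2 : ∀ w, J (J w) = -w)
    (hJskew : ∀ w w', ⟪J w, w'⟫ = -⟪w, J w'⟫)
    (hPHWC : J ∘ₗ ((φ ∘ₗ LinearMap.adjoint φ) ∘ₗ J - J ∘ₗ (φ ∘ₗ LinearMap.adjoint φ)) = 0)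
    (F : V →ₗ[ℝ] V)
    (hF3 : ∀ x, F (F (F x)) + F x = 0)
    (hFskew : ∀ x y, ⟪F x, y⟫ = -⟪x, F y⟫)
    (heig : Module.End.eigenspace (LinearMap.baseChange ℂ F) Complex.I =
      Submodule.map (LinearMap.baseChange ℂ (LinearMap.adjoint φ))
        (Module.End.eigenspace (LinearMap.baseChange ℂ J) Complex.I)) :
    finrank ℝ (LinearMap.range F) = finrank ℝ (LinearMap.range φ) ∧
    finrank ℝ (LinearMap.range φ) = finrank ℝ W ∧
    LinearMap.ker F = LinearMap.ker φ := by
  set ψ := LinearMap.adjoint φ with hψ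
  -- complexified structural identities
  have hF3c : ∀ x : ℂ ⊗[ℝ] V,
      F.baseChange ℂ (F.baseChange ℂ (F.baseChange ℂ x)) = -(F.baseChange ℂ x) := by
    intro x
    induction x using TensorProduct.induction_on with
    | zero => simp
    | tmul c v =>
      simp only [LinearMap.baseChange_tmul]
      rw [← TensorProduct.tmul_neg, ← eq_neg_iff_add_eq_zero.mpr (hF3 v)]
    | add a b ha hb => simp only [map_add, ha, hb, neg_add]
  have hJ2c : ∀ z : ℂ ⊗[ℝ] W, J.baseChange ℂ (J.baseChange ℂ z) = -z := by
    intro z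
    induction z using TensorProduct.induction_on with
    | zero => simp
    | tmul c w =>
      simp only [LinearMap.baseChange_tmul]
      rw [hJ2, TensorProduct.tmul_neg]
    | add a b ha hb => simp only [map_add, ha, hb, neg_add]
  -- the complexified range equality
  have hrangeC : LinearMap.range (F.baseChange ℂ) = LinearMap.range (ψ.baseChange ℂ) := by
    apply le_antisymm
    · rintro x ⟨y, rfl⟩
      obtain ⟨u, w, hu, hw, hx⟩ := decomp_eig F (F.baseChange ℂ y) (hF3c y)
      have hu' : u ∈ LinearMap.range (ψ.baseChange ℂ) := by
        rw [heig] at hu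
        obtain ⟨s, _, hs⟩ := hu
        exact ⟨s, hs⟩
      have hw' : w ∈ LinearMap.range (ψ.baseChange ℂ) := by
        rw [heig] at hw
        obtain ⟨s, _, hs⟩ := hw
        refine ⟨conjT W s, ?_⟩
        have h2 := congrArg (conjT V) hs
        rw [conjT_conjT, conjT_baseChange] at h2
        exact h2
      rw [hx]
      exact Submodule.add_mem _ (Submodule.smul_mem _ _ hu') (Submodule.smul_mem _ _ hw')
    · rintro x ⟨z, rfl⟩
      obtain ⟨u, w, hu, hw, hz⟩ := decomp_eig J z (hJ2c z)
      have hu' : ψ.baseChange ℂ u ∈ LinearMap.range (F.baseChange ℂ) := by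
        apply eig_mem_range
        rw [heig]
        exact ⟨u, hu, rfl⟩
      have hw' : ψ.baseChange ℂ w ∈ LinearMap.range (F.baseChange ℂ) := by
        have h1 : ψ.baseChange ℂ (conjT W w) ∈
            Module.End.eigenspace (F.baseChange ℂ) Complex.I := by
          rw [heig]
          exact ⟨conjT W w, hw, rfl⟩
        obtain ⟨r, hr⟩ := eig_mem_range F _ h1
        refine ⟨conjT V r, ?_⟩
        have h2 := congrArg (conjT V) hr
        rw [conjT_baseChange, conjT_baseChange, conjT_conjT] at h2
        exact h2
      rw [hz, map_add, map_smul, map_smul]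
      exact Submodule.add_mem _ (Submodule.smul_mem _ _ hu') (Submodule.smul_mem _ _ hw')
  -- descend to the real range equality
  have hrange : LinearMap.range F = LinearMap.range ψ := by
    ext x
    constructor
    · rintro ⟨y, rfl⟩
      have hmem : F.baseChange ℂ ((1 : ℂ) ⊗ₜ y) ∈ LinearMap.range (ψ.baseChange ℂ) := by
        rw [← hrangeC]; exact ⟨(1 : ℂ) ⊗ₜ y, rfl⟩
      obtain ⟨z, hz⟩ := hmem
      refine ⟨reT W z, ?_⟩
      have h1 := congrArg (reT V) hz
      rw [reT_baseChange, reT_baseChange] at h1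
      simpa using h1
    · rintro ⟨w, rfl⟩
      have hmem : ψ.baseChange ℂ ((1 : ℂ) ⊗ₜ w) ∈ LinearMap.range (F.baseChange ℂ) := by
        rw [hrangeC]; exact ⟨(1 : ℂ) ⊗ₜ w, rfl⟩
      obtain ⟨z, hz⟩ := hmem
      refine ⟨reT V z, ?_⟩
      have h1 := congrArg (reT V) hz
      rw [reT_baseChange, reT_baseChange] at h1
      simpa using h1
  -- ψ is injective since φ is surjective
  have hψinj : Function.Injective ψ := by
    rw [← LinearMap.ker_eq_bot]
    rw [Submodule.eq_bot_iff]
    intro w hw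
    rw [LinearMap.mem_ker] at hw
    have : ⟪w, w⟫ = 0 := by
      obtain ⟨v, hv⟩ := hsurj w
      calc ⟪w, w⟫ = ⟪φ v, w⟫ := by rw [hv]
        _ = ⟪v, ψ w⟫ := (LinearMap.adjoint_inner_right φ v w).symm
        _ = 0 := by rw [hw, inner_zero_right]
    exact inner_self_eq_zero.mp this
  have hrφ : LinearMap.range φ = ⊤ := LinearMap.range_eq_top.mpr hsurj
  refine ⟨?_, ?_, ?_⟩
  · rw [hrange, LinearMap.finrank_range_of_inj hψinj, hrφ]
    simp [finrank_top]
  · rw [hrφ]; simp [finrank_top]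
  · ext x
    simp only [LinearMap.mem_ker]
    constructor
    · intro h
      have hall : ∀ w', ⟪x, ψ w'⟫ = 0 := by
        intro w'
        have : ψ w' ∈ LinearMap.range F := by rw [hrange]; exact ⟨w', rfl⟩
        obtain ⟨y, hy⟩ := this
        rw [← hy]
        have h0 : ⟪F x, y⟫ = 0 := by rw [h, inner_zero_left]
        linarith [hFskew x y]
      have : ⟪φ x, φ x⟫ = 0 := by
        rw [← LinearMap.adjoint_inner_right φ x (φ x)]
        exact hall (φ x)
      exact inner_self_eq_zero.mp this
    · intro h
      have hall : ∀ y, ⟪x, F y⟫ = 0 := by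
        intro y
        have : F y ∈ LinearMap.range ψ := by rw [← hrange]; exact ⟨y, rfl⟩
        obtain ⟨w', hw'⟩ := this
        rw [← hw', hψ, LinearMap.adjoint_inner_right φ x w', h, inner_zero_left]
      have : ⟪F x, F x⟫ = 0 := by
        have h1 := hFskew x (F x)
        rw [hall (F x)] at h1
        linarith [h1]
      exact inner_self_eq_zero.mp this
end

section
/- Let φ : V → W be a PHWC linear map into (W, J, h) with J a compatible complex structure, and F the induced metric almost f-structure on V. Then the pullback 2-form satisfies (φ*Ω)(X, Y) = (φ*h)(FX, Y) for all X, Y ∈ V, where Ω(E₁,E₂) = h(JE₁, E₂) and (φ*h)(X,Y) = h(φX, φY), (φ*Ω)(X,Y) = Ω(φX, φY). -/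
open scoped TensorProduct RealInnerProductSpace
open Module

/-- Real part extraction from `ℂ ⊗[ℝ] V`. -/
noncomputable def realPartMap (V : Type*) [AddCommGroup V] [Module ℝ V] :
    ℂ ⊗[ℝ] V →ₗ[ℝ] V :=
  (TensorProduct.lid ℝ V).toLinearMap ∘ₗ LinearMap.rTensor V Complex.reLm

lemma realPartMap_tmul (V : Type*) [AddCommGroup V] [Module ℝ V] (c : ℂ) (v : V) :
    realPartMap V (c ⊗ₜ v) = c.re • v := by
  simp [realPartMap]

/-- for a PHWC linear map `φ : V → (W, J, h)` with induced metric almost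
f-structure `F` on `V`, the pullback of the fundamental 2-form `Ω = h(J·,·)` satisfies
`(φ*Ω)(X, Y) = (φ*h)(FX, Y)`, i.e. `⟪J (φ X), φ Y⟫ = ⟪φ (F X), φ Y⟫` for all `X, Y`. -/
theorem phwc_pullback_fundamental_form
    (V W : Type*) [NormedAddCommGroup V] [InnerProductSpace ℝ V] [FiniteDimensional ℝ V]
    [NormedAddCommGroup W] [InnerProductSpace ℝ W] [FiniteDimensional ℝ W]
    (φ : V →ₗ[ℝ] W) (J : W →ₗ[ℝ] W)
    (hJ2 : ∀ w, J (J w) = -w)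
    (hJskew : ∀ w w', ⟪J w, w'⟫ = -⟪w, J w'⟫)
    (hPHWC : J ∘ₗ ((φ ∘ₗ LinearMap.adjoint φ) ∘ₗ J - J ∘ₗ (φ ∘ₗ LinearMap.adjoint φ)) = 0)
    (F : V →ₗ[ℝ] V)
    (hF3 : ∀ x, F (F (F x)) + F x = 0)
    (hFskew : ∀ x y, ⟪F x, y⟫ = -⟪x, F y⟫)
    (heig : Module.End.eigenspace (LinearMap.baseChange ℂ F) Complex.I =
      Submodule.map (LinearMap.baseChange ℂ (LinearMap.adjoint φ))
        (Module.End.eigenspace (LinearMap.baseChange ℂ J) Complex.I)) :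
    ∀ x y : V, ⟪J (φ x), φ y⟫ = ⟪φ (F x), φ y⟫ := by
  set ψ := LinearMap.adjoint φ with hψ
  -- Key intertwining: F ∘ ψ = ψ ∘ J
  have key : ∀ w : W, F (ψ w) = ψ (J w) := by
    intro w
    -- the (+i)-eigenvector of J_ℂ associated to w
    set p : ℂ ⊗[ℝ] W := (1 : ℂ) ⊗ₜ w - Complex.I ⊗ₜ (J w) with hp
    have hpmem : p ∈ Module.End.eigenspace (LinearMap.baseChange ℂ J) Complex.I := by
      rw [Module.End.mem_eigenspace_iff]
      simp only [hp, map_sub, LinearMap.baseChange_tmul, hJ2 w, smul_sub,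
        TensorProduct.smul_tmul', smul_eq_mul, mul_one, Complex.I_mul_I,
        TensorProduct.tmul_neg, TensorProduct.neg_tmul, sub_neg_eq_add]
      abel
    have hmem2 : LinearMap.baseChange ℂ ψ p ∈
        Module.End.eigenspace (LinearMap.baseChange ℂ F) Complex.I := by
      rw [heig]
      exact Submodule.mem_map_of_mem hpmem
    rw [Module.End.mem_eigenspace_iff] at hmem2
    -- expand both sides into combinations of pure tensors and take real parts
    have hexp : (1 : ℂ) ⊗ₜ[ℝ] (F (ψ w)) - Complex.I ⊗ₜ (F (ψ (J w)))
        = (1 : ℂ) ⊗ₜ[ℝ] (ψ (J w)) + Complex.I ⊗ₜ (ψ w) := by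
      have := hmem2
      simp only [hp, map_sub, LinearMap.baseChange_tmul, smul_sub,
        TensorProduct.smul_tmul', smul_eq_mul, mul_one, Complex.I_mul_I,
        TensorProduct.neg_tmul, sub_neg_eq_add] at this
      linear_combination (norm := module) this
    have := congrArg (realPartMap V) hexp
    simpa [map_sub, map_add, realPartMap_tmul] using this
  intro x y
  have h1 : ⟪φ (F x), φ y⟫ = ⟪F x, ψ (φ y)⟫ := by
    rw [hψ, LinearMap.adjoint_inner_right]
  rw [h1, hFskew, key, hψ, LinearMap.adjoint_inner_right, hJskew]
end

section
/- Let φ : (M, g) → (N, J, h) be a PHWC submersion to a Kähler manifold whose second fundamental form satisfies ∇dφ(X, FY) = −J ∇dφ(X, Y) for all horizontal X, Y (equivalently ∇dφ(X, T^{0,1}M) ⊆ φ⁻¹T^{1,0}N). Then on horizontal vectors, dφ((∇_X F)Y) + 2∇dφ(X, FY) = 0; in particular dφ((∇_X F)X + (∇_{FX}F)FX) = 0 for all horizontal X. -/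
/-- proof of Corollary 3.3: let `φ : (M,g) → (N,J,h)` be a PHWC submersion
to a Kähler manifold whose second fundamental form satisfies
`∇dφ(X, FY) = −J ∇dφ(X,Y)` for horizontal `X, Y`.  Then, on horizontal vectors,
`dφ((∇_X F)Y) + 2 ∇dφ(X, FY) = 0`; in particular
`dφ((∇_X F)X + (∇_{FX} F)(FX)) = 0` for all horizontal `X`.

Abstract model: `VF` = vector fields on `M`, `S` = sections of `φ⁻¹TN`; `nabla` is the
Levi-Civita connection of `g`, `nablaPhi` the pullback connection (with `J` parallel,
`N` being Kähler), `dphi` the differential, `F` the induced f-structure (with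
`F² = −Id` on the horizontal distribution `Hor`, which is `F`-invariant), `sff` the
(symmetric) second fundamental form and `covF X Y = (∇_X F)Y`. -/
theorem phwc_kaehler_sff_identity
    (VF S : Type*) [AddCommGroup VF] [Module ℝ VF] [AddCommGroup S] [Module ℝ S]
    (nabla : VF → VF →ₗ[ℝ] VF)
    (nablaPhi : VF → S →ₗ[ℝ] S)
    (dphi : VF →ₗ[ℝ] S)
    (F : VF →ₗ[ℝ] VF)
    (J : S →ₗ[ℝ] S)
    (Hor : Submodule ℝ VF)
    -- Kähler target: J is parallel for the pullback connection, and J² = −Id: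
    (hJ2 : ∀ s, J (J s) = -s)
    (hKaehler : ∀ X s, nablaPhi X (J s) = J (nablaPhi X s))
    -- φ is holomorphic for the induced f-structure F:
    (hhol : ∀ X, dphi (F X) = J (dphi X))
    -- F is an almost complex structure on the (F-invariant) horizontal distribution:
    (hHorF : ∀ X ∈ Hor, F X ∈ Hor)
    (hF2 : ∀ X ∈ Hor, F (F X) = -X)
    -- the second fundamental form ∇dφ, and its symmetry:
    (sff : VF → VF → S)
    (hsff : ∀ X Y, sff X Y = nablaPhi X (dphi Y) - dphi (nabla X Y))
    (hsym : ∀ X Y, sff X Y = sff Y X)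
    -- (∇_X F)(Y):
    (covF : VF → VF → VF)
    (hcovF : ∀ X Y, covF X Y = nabla X (F Y) - F (nabla X Y))
    -- the hypothesis ∇dφ(X, FY) = −J ∇dφ(X, Y) on horizontal vectors:
    (hcond : ∀ X ∈ Hor, ∀ Y ∈ Hor, sff X (F Y) = -J (sff X Y)) :
    (∀ X ∈ Hor, ∀ Y ∈ Hor, dphi (covF X Y) + 2 • sff X (F Y) = 0) ∧
    (∀ X ∈ Hor, dphi (covF X X + covF (F X) (F X)) = 0) := by
  have key : ∀ X ∈ Hor, ∀ Y ∈ Hor, dphi (covF X Y) + 2 • sff X (F Y) = 0 := by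
    intro X hX Y hY
    have h1 : dphi (covF X Y)
        = nablaPhi X (dphi (F Y)) - sff X (F Y)
          - J (nablaPhi X (dphi Y) - sff X Y) := by
      rw [hcovF, map_sub, hhol]
      have e1 : dphi (nabla X (F Y)) = nablaPhi X (dphi (F Y)) - sff X (F Y) := by
        rw [hsff]; abel
      have e2 : dphi (nabla X Y) = nablaPhi X (dphi Y) - sff X Y := by
        rw [hsff]; abel
      rw [e1, e2]
    rw [h1, hhol, hKaehler, map_sub, hcond X hX Y hY]
    abel
  refine ⟨key, fun X hX => ?_⟩
  have hFX := hHorF X hX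
  have h1 := key X hX X hX
  have h2 := key (F X) hFX (F X) hFX
  rw [hF2 X hX] at h2
  have hsymm : sff (F X) (-X) = - sff X (F X) := by
    rw [hsym X (F X)]
    simp only [hsff, map_neg]
    abel
  rw [hsymm] at h2
  rw [map_add]
  have : dphi (covF X X) = -(2 • sff X (F X)) := by linear_combination (norm := abel) h1
  have h2' : dphi (covF (F X) (F X)) = 2 • sff X (F X) := by
    linear_combination (norm := abel) h2
  rw [this, h2']
  abel
end
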